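/- arXiv:1608.06067 — 4 statements merged into one kernel-verified Lean document; each statement's English description precedes it below -/
import Mathlib

section
/- Let R > 0 and let f_R : ℝ² → ℝ be the uniform density on the closed disk of radius R centered at the origin, i.e. f_R(x) = 1/(πR²) if |x| ≤ R and f_R(x) = 0 otherwise. Then for every v ∈ ℝ², the convolution satisfies (f_R ⋆ f_R)(v) = ∫_{ℝ²} f_R(x) f_R(v − x) dx = A_R(|v|)/(π² R⁴). (This identity is step (e) in the proof of Lemma 3 for the SOCP second moment density.) -/
open MeasureTheory Real

/-- The lens-area function `A_R(r)`. -/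
noncomputable def lensArea (R r : ℝ) : ℝ :=
  if r ≤ 2 * R then 2 * R ^ 2 * Real.arccos (r / (2 * R)) - r * Real.sqrt (R ^ 2 - r ^ 2 / 4)
  else 0

/-- Uniform density on the closed disk of radius `R` centered at the origin in `ℝ²`. -/
noncomputable def diskDensity (R : ℝ) (x : EuclideanSpace ℝ (Fin 2)) : ℝ :=
  if ‖x‖ ≤ R then 1 / (π * R ^ 2) else 0

/-!
Up to the constant `(π R²)⁻²`, the integrand is the indicator of the intersection of the closed
disks of radius `R` about `0` and about `v`, so the convolution is the area of that lens. A linear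
isometry carrying `v` to `(‖v‖, 0)` preserves this area, and in coordinates the lens is
`{x² + y² ≤ R², (x - d)² + y² ≤ R²}` with `d = ‖v‖`. By Fubini its area is the integral of the
width of its vertical slices; by symmetry about `x = d / 2` this is twice the area of the circular
segment `{d / 2 ≤ x}` of one disk, computed from the primitive
`t √(R² - t²) / 2 + R² arcsin (t / R) / 2` of `√(R² - t²)`.
-/

open Metric

theorem volume_closedBall_inter_closedBall_of_norm_eq {E : Type*} [NormedAddCommGroup E]
    [InnerProductSpace ℝ E] [FiniteDimensional ℝ E] [MeasurableSpace E] [BorelSpace E]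
    {v w : E} (h : ‖v‖ = ‖w‖) (r s : ℝ) :
    volume (closedBall 0 r ∩ closedBall v s) = volume (closedBall 0 r ∩ closedBall w s) := by
  set f := (ℝ ∙ (w - v))ᗮ.reflection
  have hfw : f w = v := Submodule.reflection_sub h.symm
  have hpre : f ⁻¹' (closedBall 0 r ∩ closedBall v s) = closedBall 0 r ∩ closedBall w s := by
    ext x
    simp only [Set.mem_preimage, Set.mem_inter_iff, mem_closedBall,
      dist_eq_norm, sub_zero, ← hfw, ← map_sub, LinearIsometryEquiv.norm_map]
  rw [← hpre, f.measurePreserving.measure_preimage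
    (isClosed_closedBall.inter isClosed_closedBall).measurableSet.nullMeasurableSet]

theorem integral_sqrt_sq_sub_sq {R a : ℝ} (hR : 0 < R) (ha : -R ≤ a) (haR : a ≤ R) :
    ∫ t in a..R, √(R ^ 2 - t ^ 2) = R ^ 2 / 2 * arccos (a / R) - a / 2 * √(R ^ 2 - a ^ 2) := by
  set F : ℝ → ℝ := fun t => t / 2 * √(R ^ 2 - t ^ 2) + R ^ 2 / 2 * arcsin (t / R)
  have hcont : Continuous fun t : ℝ => √(R ^ 2 - t ^ 2) := by fun_prop
  have hderiv : ∀ t ∈ Set.Ioo a R, HasDerivAt F (√(R ^ 2 - t ^ 2)) t := by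
    rintro t ⟨hat, htR⟩
    have hpos : 0 < R ^ 2 - t ^ 2 := by nlinarith
    have hsqrt : √(1 - (t / R) ^ 2) = √(R ^ 2 - t ^ 2) / R := by
      rw [show 1 - (t / R) ^ 2 = (R ^ 2 - t ^ 2) / R ^ 2 by field_simp,
        sqrt_div hpos.le, sqrt_sq hR.le]
    have harcsin : HasDerivAt (fun t : ℝ => arcsin (t / R))
        (1 / √(1 - (t / R) ^ 2) * (1 / R)) t :=
      (hasDerivAt_arcsin (by rw [ne_eq, div_eq_iff hR.ne']; linarith)
        (by rw [ne_eq, div_eq_iff hR.ne']; linarith)).comp t ((hasDerivAt_id t).div_const R)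
    refine HasDerivAt.congr_deriv (f := F) ((((hasDerivAt_id t).div_const 2).mul
      (((hasDerivAt_pow 2 t).const_sub (R ^ 2)).sqrt hpos.ne')).add
        (harcsin.const_mul (R ^ 2 / 2))) ?_
    simp only [id, hsqrt]
    field_simp
    linear_combination (-2) * sq_sqrt hpos.le
  rw [intervalIntegral.integral_eq_sub_of_hasDeriv_right_of_le haR (by fun_prop)
    (fun t ht => (hderiv t ht).hasDerivWithinAt) (hcont.intervalIntegrable _ _)]
  simp only [F, sub_self, sqrt_zero, div_self hR.ne', arcsin_one, arccos_eq_pi_div_two_sub_arcsin]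
  ring

def planarLens (R d : ℝ) : Set (ℝ × ℝ) :=
  {p | p.1 ^ 2 + p.2 ^ 2 ≤ R ^ 2 ∧ (p.1 - d) ^ 2 + p.2 ^ 2 ≤ R ^ 2}

noncomputable def lensWidth (R d x : ℝ) : ℝ :=
  2 * √(min (R ^ 2 - x ^ 2) (R ^ 2 - (x - d) ^ 2))

theorem volume_setOf_sq_le (m : ℝ) : volume {y : ℝ | y ^ 2 ≤ m} = ENNReal.ofReal (2 * √m) := by
  rcases le_or_gt 0 m with hm | hm
  · have : {y : ℝ | y ^ 2 ≤ m} = Set.Icc (-√m) √m := by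
      ext y
      rw [Set.mem_ofPred_eq, Set.mem_Icc, ← abs_le, ← sqrt_sq_eq_abs, sqrt_le_sqrt_iff hm]
    rw [this, Real.volume_Icc, sub_neg_eq_add, two_mul]
  · have : {y : ℝ | y ^ 2 ≤ m} = ∅ :=
      Set.eq_empty_of_forall_notMem fun y hy => (hm.trans_le (sq_nonneg y)).not_ge hy
    rw [this, measure_empty, sqrt_eq_zero_of_nonpos hm.le, mul_zero, ENNReal.ofReal_zero]

theorem measurableSet_planarLens (R d : ℝ) : MeasurableSet (planarLens R d) :=
  (measurableSet_le (f := fun p : ℝ × ℝ => p.1 ^ 2 + p.2 ^ 2) (by fun_prop) (by fun_prop)).inter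
    (measurableSet_le (f := fun p : ℝ × ℝ => (p.1 - d) ^ 2 + p.2 ^ 2) (by fun_prop) (by fun_prop))

theorem measureReal_planarLens (R d : ℝ) :
    volume.real (planarLens R d) = ∫ x, lensWidth R d x := by
  have hslice : ∀ x, Prod.mk x ⁻¹' planarLens R d
      = {y : ℝ | y ^ 2 ≤ min (R ^ 2 - x ^ 2) (R ^ 2 - (x - d) ^ 2)} := by
    intro x
    ext y
    simp only [planarLens, Set.mem_preimage, le_min_iff]
    constructor <;> rintro ⟨h₁, h₂⟩ <;> constructor <;> linarith
  rw [integral_eq_lintegral_of_nonneg_ae (.of_forall fun x => by unfold lensWidth; positivity)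
    (by unfold lensWidth; fun_prop), measureReal_def, Measure.volume_eq_prod,
    Measure.prod_apply (measurableSet_planarLens R d)]
  simp only [hslice, volume_setOf_sq_le, lensWidth]

theorem continuous_lensWidth (R d : ℝ) : Continuous (lensWidth R d) := by
  unfold lensWidth; fun_prop

theorem lensWidth_eq_zero_of_notMem {R d x : ℝ} (hR : 0 ≤ R) (hx : x ∉ Set.Icc (d - R) R) :
    lensWidth R d x = 0 := by
  rw [Set.mem_Icc, not_and_or, not_le, not_le] at hx
  refine mul_eq_zero_of_right 2 (sqrt_eq_zero_of_nonpos ?_)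
  rcases hx with hx | hx
  · exact (min_le_right _ _).trans (by nlinarith)
  · exact (min_le_left _ _).trans (by nlinarith)

theorem integral_lensWidth {R d : ℝ} (hR : 0 < R) (hd : 0 ≤ d) :
    ∫ x, lensWidth R d x = lensArea R d := by
  rcases le_or_gt d (2 * R) with hd2R | hd2R
  swap
  · have : lensWidth R d = 0 := funext fun x =>
      lensWidth_eq_zero_of_notMem hR.le (by rw [Set.Icc_eq_empty (by linarith)]; simp)
    rw [this, lensArea, if_neg hd2R.not_ge, Pi.zero_def, integral_zero]
  have hint : ∀ a b, IntervalIntegrable (lensWidth R d) volume a b :=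
    (continuous_lensWidth R d).intervalIntegrable
  have hright : ∫ x in d / 2..R, lensWidth R d x = ∫ x in d / 2..R, 2 * √(R ^ 2 - x ^ 2) := by
    refine intervalIntegral.integral_congr fun x hx => ?_
    rw [Set.uIcc_of_le (by linarith)] at hx
    rw [lensWidth, min_eq_left (by nlinarith [hx.1])]
  have hleft : ∫ x in d - R..d / 2, lensWidth R d x = ∫ x in d / 2..R, 2 * √(R ^ 2 - x ^ 2) := by
    have hrefl := intervalIntegral.integral_comp_sub_left (a := d - R) (b := d / 2)
      (fun x => 2 * √(R ^ 2 - x ^ 2)) d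
    rw [show d - d / 2 = d / 2 by ring, sub_sub_cancel] at hrefl
    rw [← hrefl]
    refine intervalIntegral.integral_congr fun x hx => ?_
    rw [Set.uIcc_of_le (by linarith)] at hx
    rw [lensWidth, min_eq_right (by nlinarith [hx.2]), sub_sq', sub_sq']
    ring_nf
  have hsupp : ∫ x, lensWidth R d x = ∫ x in d - R..R, lensWidth R d x := by
    rw [intervalIntegral.integral_of_le (by linarith), ← integral_Icc_eq_integral_Ioc]
    exact (setIntegral_eq_integral_of_forall_compl_eq_zero
      fun x hx => lensWidth_eq_zero_of_notMem hR.le hx).symm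
  rw [hsupp, ← intervalIntegral.integral_add_adjacent_intervals (hint _ (d / 2)) (hint _ _),
    hleft, hright, intervalIntegral.integral_const_mul,
    integral_sqrt_sq_sub_sq hR (by linarith) (by linarith), lensArea, if_pos hd2R,
    div_div, show (d / 2) ^ 2 = d ^ 2 / 4 by ring]
  ring

theorem EuclideanSpace.norm_le_iff_sq_add_sq {R : ℝ} (hR : 0 ≤ R) (x : EuclideanSpace ℝ (Fin 2)) :
    ‖x‖ ≤ R ↔ x 0 ^ 2 + x 1 ^ 2 ≤ R ^ 2 := by
  rw [← pow_le_pow_iff_left₀ (norm_nonneg x) hR two_ne_zero, EuclideanSpace.norm_sq_eq,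
    Fin.sum_univ_two, Real.norm_eq_abs, Real.norm_eq_abs, sq_abs, sq_abs]

theorem volume_closedBall_inter_closedBall_single {R : ℝ} (hR : 0 ≤ R) (d : ℝ) :
    volume (closedBall (0 : EuclideanSpace ℝ (Fin 2)) R ∩ closedBall (EuclideanSpace.single 0 d) R)
      = volume (planarLens R d) := by
  have hcoords : MeasurePreserving (fun x : EuclideanSpace ℝ (Fin 2) => (x 0, x 1)) :=
    (volume_preserving_finTwoArrow ℝ).comp
      (EuclideanSpace.volume_preserving_symm_measurableEquiv_toLp (Fin 2))
  have hpre : (fun x : EuclideanSpace ℝ (Fin 2) => (x 0, x 1)) ⁻¹' planarLens R d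
      = closedBall 0 R ∩ closedBall (EuclideanSpace.single 0 d) R := by
    ext x
    simp [planarLens, dist_eq_norm, EuclideanSpace.norm_le_iff_sq_add_sq hR]
  rw [← hpre, hcoords.measure_preimage (measurableSet_planarLens R d).nullMeasurableSet]

theorem diskDensity_mul_diskDensity_sub (R : ℝ) (v x : EuclideanSpace ℝ (Fin 2)) :
    diskDensity R x * diskDensity R (v - x)
      = (closedBall 0 R ∩ closedBall v R).indicator (fun _ => (1 / (π * R ^ 2)) ^ 2) x := by
  classical
  rw [Set.indicator_apply]
  simp only [diskDensity, Set.mem_inter_iff, mem_closedBall', dist_eq_norm, zero_sub, norm_neg]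
  split_ifs <;> simp_all [sq]

theorem stmt1 (R : ℝ) (hR : 0 < R) (v : EuclideanSpace ℝ (Fin 2)) :
    (∫ x : EuclideanSpace ℝ (Fin 2), diskDensity R x * diskDensity R (v - x))
      = lensArea R ‖v‖ / (π ^ 2 * R ^ 4) := by
  have hlens : volume.real (closedBall 0 R ∩ closedBall v R) = lensArea R ‖v‖ := by
    rw [measureReal_def, volume_closedBall_inter_closedBall_of_norm_eq
      (w := EuclideanSpace.single 0 ‖v‖) (by simp), volume_closedBall_inter_closedBall_single hR.le,
      ← measureReal_def, measureReal_planarLens, integral_lensWidth hR (norm_nonneg v)]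
  simp_rw [diskDensity_mul_diskDensity_sub]
  rw [integral_indicator_const _ (isClosed_closedBall.inter isClosed_closedBall).measurableSet,
    hlens, smul_eq_mul]
  field_simp
end

section
/- For every R > 0 and every r with 0 ≤ r ≤ 2R, one has πR² − A_R(r) ≤ (π/2 + 1)·R·r. Consequently, for every fixed r ≥ 0, A_R(r)/(πR²) → 1 as R → ∞. (This quantitative approximation A_R(|x−y|) ≈ πR² for large R is step (a) in the proof of Lemma 2.) -/
/-!
By Jordan's inequality `2x/π ≤ sin x` on `[0, π/2]`, `arcsin x ≤ πx/2` on `[0, 1]`, hence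
`arccos x ≥ π(1 - x)/2`. With `x = r/(2R)` this gives `2R² arccos x ≥ πR² - πRr/2`, and the
chord term `r √(R² - r²/4)` is at most `Rr`. Since also `A_R(r) ≤ πR²`, the ratio `A_R(r)/(πR²)`
is squeezed between `1 - (π/2 + 1) r/(πR)` and `1`.
-/

open Real Filter

namespace Real

lemma arcsin_le_pi_div_two_mul {x : ℝ} (hx₀ : 0 ≤ x) (hx₁ : x ≤ 1) : arcsin x ≤ π / 2 * x := by
  have jordan := mul_le_sin (arcsin_nonneg.2 hx₀) (arcsin_le_pi_div_two x)
  rw [sin_arcsin (by linarith) hx₁, div_mul_eq_mul_div, div_le_iff₀ pi_pos] at jordan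
  linarith

lemma pi_div_two_mul_one_sub_le_arccos {x : ℝ} (hx₀ : 0 ≤ x) (hx₁ : x ≤ 1) :
    π / 2 * (1 - x) ≤ arccos x := by
  rw [arccos_eq_pi_div_two_sub_arcsin]
  linarith [arcsin_le_pi_div_two_mul hx₀ hx₁]

end Real

lemma lensArea_le_pi_mul_sq {R r : ℝ} (hr : 0 ≤ r) : lensArea R r ≤ π * R ^ 2 := by
  unfold lensArea
  split_ifs with hr₂
  · have harccos : arccos (r / (2 * R)) ≤ π / 2 :=
      arccos_le_pi_div_two.2 (div_nonneg hr (by linarith))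
    have hchord : 0 ≤ r * √(R ^ 2 - r ^ 2 / 4) := by positivity
    nlinarith [sq_nonneg R]
  · positivity

lemma pi_mul_sq_sub_lensArea_le {R r : ℝ} (hR : 0 < R) (hr : 0 ≤ r) :
    π * R ^ 2 - lensArea R r ≤ (π / 2 + 1) * R * r := by
  unfold lensArea
  split_ifs with hr₂
  · have harccos := pi_div_two_mul_one_sub_le_arccos (x := r / (2 * R)) (by positivity)
      ((div_le_one (by positivity)).2 hr₂)
    have hsqrt : √(R ^ 2 - r ^ 2 / 4) ≤ R :=
      (sqrt_le_sqrt (by nlinarith)).trans_eq (sqrt_sq hR.le)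
    have hscale : π / 2 * (1 - r / (2 * R)) * (2 * R ^ 2) = π * R ^ 2 - π / 2 * R * r := by
      field_simp
    nlinarith [mul_le_mul_of_nonneg_left harccos (by positivity : (0 : ℝ) ≤ 2 * R ^ 2),
      mul_le_mul_of_nonneg_left hsqrt hr]
  · have hRr : R * (2 * R) ≤ R * r := mul_le_mul_of_nonneg_left (not_le.1 hr₂).le hR.le
    nlinarith [pi_pos]

lemma tendsto_lensArea_div_atTop {r : ℝ} (hr : 0 ≤ r) :
    Tendsto (fun R ↦ lensArea R r / (π * R ^ 2)) atTop (nhds 1) := by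
  have hlower : Tendsto (fun R : ℝ ↦ 1 - (π / 2 + 1) * r / π / R) atTop (nhds 1) := by
    simpa using tendsto_const_nhds.sub
      ((tendsto_const_nhds (x := (π / 2 + 1) * r / π)).div_atTop tendsto_id)
  refine tendsto_of_tendsto_of_tendsto_of_le_of_le' hlower tendsto_const_nhds ?_ ?_
  all_goals filter_upwards [eventually_gt_atTop 0] with R hR
  · rw [le_div_iff₀ (by positivity)]
    have hexpand : (1 - (π / 2 + 1) * r / π / R) * (π * R ^ 2)
        = π * R ^ 2 - (π / 2 + 1) * R * r := by
      field_simp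
    linarith [pi_mul_sq_sub_lensArea_le hR hr]
  · rw [div_le_one (by positivity)]
    exact lensArea_le_pi_mul_sq hr

theorem stmt3 :
    (∀ R r : ℝ, 0 < R → 0 ≤ r → r ≤ 2 * R →
      π * R ^ 2 - lensArea R r ≤ (π / 2 + 1) * R * r) ∧
    (∀ r : ℝ, 0 ≤ r →
      Tendsto (fun R : ℝ => lensArea R r / (π * R ^ 2)) atTop (nhds 1)) :=
  ⟨fun _ _ hR hr _ ↦ pi_mul_sq_sub_lensArea_le hR hr, fun _ ↦ tendsto_lensArea_div_atTop⟩
end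

section
/- For every real α > 2 and every ε > 0, the function g_ε(x) = 1/(ε + |x|^α) on ℝ² is Lebesgue integrable and ∫_{ℝ²} g_ε(x) dx = (2π²/α)·ε^{(2−α)/α}·csc(2π/α). (This evaluates the planar integral ∫ g_ε appearing in the mean interference of Lemma 1 and in Lemma 2.) -/
open MeasureTheory Real

/-- The regularized path-loss function `g_ε(x) = 1/(ε + |x|^α)` on `ℝ²`. -/
noncomputable def gE (ε α : ℝ) (x : EuclideanSpace ℝ (Fin 2)) : ℝ :=
  1 / (ε + ‖x‖ ^ α)

/-!
In polar coordinates the integral is `2π ∫₀^∞ r / (ε + r^α) dr`. The substitutions `r^α = y` and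
`y = ε u` turn this into `(2π/α) ε^(2/α - 1) ∫₀^∞ u^(s-1) / (1 + u) du` with `s = 2/α ∈ (0, 1)`,
and `u = t / (1 - t)` identifies the last integral with `B(s, 1 - s) = Γ(s) Γ(1 - s) = π / sin (π s)`.
-/

open Set

lemma integral_rpow_mul_one_sub_rpow_neg {s : ℝ} (h0 : 0 < s) (h1 : s < 1) :
    ∫ x in (0 : ℝ)..1, x ^ (s - 1) * (1 - x) ^ (-s) = π / sin (π * s) := by
  have hbeta : Complex.betaIntegral s (1 - s) =
      ↑(∫ x in (0 : ℝ)..1, x ^ (s - 1) * (1 - x) ^ (-s)) := by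
    rw [Complex.betaIntegral, ← intervalIntegral.integral_ofReal]
    refine intervalIntegral.integral_congr fun x hx => ?_
    rw [uIcc_of_le zero_le_one] at hx
    simp only [Complex.ofReal_mul, Complex.ofReal_cpow hx.1,
      Complex.ofReal_cpow (sub_nonneg.2 hx.2)]
    push_cast
    ring_nf
  have h := Complex.Gamma_mul_Gamma_eq_betaIntegral (s := s) (t := 1 - s)
    (by simpa using h0) (by simpa using h1)
  rw [Complex.Gamma_mul_Gamma_one_sub, add_sub_cancel, Complex.Gamma_one, one_mul, hbeta] at h
  exact_mod_cast h.symm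

lemma image_div_one_sub_Ioo : (fun t : ℝ => t / (1 - t)) '' Ioo 0 1 = Ioi 0 := by
  ext y
  constructor
  · rintro ⟨t, ⟨ht0, ht1⟩, rfl⟩
    exact div_pos ht0 (sub_pos.2 ht1)
  · intro (hy : 0 < y)
    refine ⟨y / (1 + y), ⟨by positivity, (div_lt_one (by positivity)).2 (by linarith)⟩, ?_⟩
    field_simp
    ring

lemma integral_Ioi_rpow_div_one_add {s : ℝ} (h0 : 0 < s) (h1 : s < 1) :
    ∫ x in Ioi (0 : ℝ), x ^ (s - 1) / (1 + x) = π / sin (π * s) := by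
  have hderiv : ∀ t ∈ Ioo (0 : ℝ) 1,
      HasDerivWithinAt (fun t => t / (1 - t)) ((1 - t) ^ 2)⁻¹ (Ioo 0 1) t := by
    intro t ht
    have h1t : 1 - t ≠ 0 := (sub_pos.2 ht.2).ne'
    refine (((hasDerivAt_id' t).div ((hasDerivAt_id' t).const_sub 1) h1t).congr_deriv
      ?_).hasDerivWithinAt
    ring
  have hinj : InjOn (fun t : ℝ => t / (1 - t)) (Ioo 0 1) := by
    intro a ha b hb hab
    have ha1 : 1 - a ≠ 0 := (sub_pos.2 ha.2).ne'
    have hb1 : 1 - b ≠ 0 := (sub_pos.2 hb.2).ne'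
    field_simp at hab
    linarith
  rw [← image_div_one_sub_Ioo,
    integral_image_eq_integral_abs_deriv_smul measurableSet_Ioo hderiv hinj,
    ← integral_rpow_mul_one_sub_rpow_neg h0 h1, intervalIntegral.integral_of_le zero_le_one,
    integral_Ioc_eq_integral_Ioo]
  refine setIntegral_congr_fun measurableSet_Ioo fun t ⟨ht0, ht1⟩ => ?_
  have h1t : 0 < 1 - t := sub_pos.2 ht1
  have hsum : 1 + t / (1 - t) = (1 - t)⁻¹ := by field_simp; ring
  rw [hsum, smul_eq_mul, abs_of_pos (by positivity), div_rpow ht0.le h1t.le, div_inv_eq_mul,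
    rpow_neg h1t.le, rpow_sub_one h1t.ne']
  field_simp

lemma integral_Ioi_rpow_div_add {s ε : ℝ} (h0 : 0 < s) (h1 : s < 1) (hε : 0 < ε) :
    ∫ y in Ioi (0 : ℝ), y ^ (s - 1) / (ε + y) = ε ^ (s - 1) * (π / sin (π * s)) := by
  have hscale := integral_comp_mul_left_Ioi' (fun y => y ^ (s - 1) / (ε + y)) 0 hε
  rw [mul_zero] at hscale
  rw [← hscale, ← integral_Ioi_rpow_div_one_add h0 h1, smul_eq_mul, ← integral_const_mul,
    ← integral_const_mul]
  refine setIntegral_congr_fun measurableSet_Ioi fun x (hx : 0 < x) => ?_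
  rw [mul_rpow hε.le hx.le, rpow_sub_one hε.ne']
  field_simp

lemma integral_Ioi_rpow_div_add_rpow {d α ε : ℝ} (hd : 0 < d) (hdα : d < α) (hε : 0 < ε) :
    ∫ r in Ioi (0 : ℝ), r ^ (d - 1) / (ε + r ^ α) =
      α⁻¹ * ε ^ (d / α - 1) * (π / sin (π * (d / α))) := by
  have hα : 0 < α := hd.trans hdα
  rw [mul_assoc, ← integral_Ioi_rpow_div_add (div_pos hd hα) ((div_lt_one hα).2 hdα) hε,
    ← integral_const_mul,
    ← integral_comp_rpow_Ioi_of_pos (g := fun y => α⁻¹ * (y ^ (d / α - 1) / (ε + y))) hα]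
  refine setIntegral_congr_fun measurableSet_Ioi fun r (hr : 0 < r) => ?_
  rw [smul_eq_mul, ← rpow_mul hr.le, mul_sub, mul_div_cancel₀ _ hα.ne', mul_one]
  have hpow : r ^ (α - 1) * r ^ (d - α) = r ^ (d - 1) := by
    rw [← rpow_add hr]; ring_nf
  rw [← hpow]
  field_simp

lemma integral_fun_norm_euclideanSpace_fin_two (f : ℝ → ℝ) :
    ∫ x : EuclideanSpace ℝ (Fin 2), f ‖x‖ = 2 * π * ∫ r in Ioi (0 : ℝ), r * f r := by
  rw [integral_fun_norm_addHaar, finrank_euclideanSpace_fin, measureReal_def,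
    EuclideanSpace.volume_ball_fin_two]
  simp [mul_assoc, pi_nonneg]

theorem stmt5 (α ε : ℝ) (hα : 2 < α) (hε : 0 < ε) :
    Integrable (gE ε α) volume ∧
    (∫ x : EuclideanSpace ℝ (Fin 2), gE ε α x)
      = (2 * π ^ 2 / α) * ε ^ ((2 - α) / α) * (1 / Real.sin (2 * π / α)) := by
  have hα0 : 0 < α := by linarith
  have hval : ∫ x : EuclideanSpace ℝ (Fin 2), gE ε α x
      = (2 * π ^ 2 / α) * ε ^ ((2 - α) / α) * (1 / Real.sin (2 * π / α)) := calc
    _ = 2 * π * ∫ r in Ioi (0 : ℝ), r ^ ((2 : ℝ) - 1) / (ε + r ^ α) := by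
      simp only [gE, integral_fun_norm_euclideanSpace_fin_two (fun r => 1 / (ε + r ^ α))]
      norm_num [div_eq_mul_inv]
    _ = 2 * π * (α⁻¹ * ε ^ (2 / α - 1) * (π / sin (π * (2 / α)))) := by
      rw [integral_Ioi_rpow_div_add_rpow two_pos hα hε]
    _ = _ := by
      rw [show 2 / α - 1 = (2 - α) / α by field_simp, show π * (2 / α) = 2 * π / α by ring]
      ring
  have hsin : 0 < sin (2 * π / α) :=
    sin_pos_of_pos_of_lt_pi (by positivity) ((div_lt_iff₀ hα0).2 (by nlinarith [pi_pos]))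
  -- The Bochner integral of a non-integrable function is `0`, so a positive value forces integrability.
  refine ⟨.of_integral_ne_zero ?_, hval⟩
  rw [hval]
  positivity
end

section
/- Fix ε > 0 and α > 2, and let g_ε(x) = 1/(ε + |x|^α) on ℝ². For every nonzero v ∈ ℝ², the shifted correlation integral satisfies ∫_{ℝ²} g_ε(x)·g_ε(x − v) dx < ∫_{ℝ²} g_ε(x)² dx (both integrals being finite). (This is the strict inequality θ < θ′ between the numerator and denominator integrals of the PPP correlation coefficient ζ_P, which guarantees 0 < ζ_P < 1 and is needed in the proofs of Propositions 1 and 2.) -/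
open MeasureTheory Real

/-! By translation invariance, `∫ (g - g(· - v))² = 2 ∫ g² - 2 ∫ g · g(· - v)`, so the
strict inequality says that `g` and its translate by `v` differ on a set of positive measure.
As `g` is an injective function of `‖x‖`, they agree only on the perpendicular bisector of `0`
and `v`, a null line. Finiteness comes from `g(x) ≤ C (1 + ‖x‖)^{-α}` with `2α > 2 = dim ℝ²`. -/

namespace MeasureTheory

variable {G : Type*} [AddGroup G] [MeasurableSpace G] [MeasurableAdd G]
  {μ : Measure G} [μ.IsAddRightInvariant] {f : G → ℝ}

theorem MemLp.comp_sub_right (hf : MemLp f 2 μ) (v : G) : MemLp (fun x => f (x - v)) 2 μ :=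
  hf.comp_measurePreserving (measurePreserving_sub_right μ v)

theorem MemLp.integrable_mul_comp_sub (hf : MemLp f 2 μ) (v : G) :
    Integrable (fun x => f x * f (x - v)) μ :=
  hf.integrable_mul (hf.comp_sub_right v)

theorem MemLp.integral_mul_comp_sub_lt_integral_sq (hf : MemLp f 2 μ) {v : G}
    (hne : ¬ f =ᵐ[μ] fun x => f (x - v)) :
    ∫ x, f x * f (x - v) ∂μ < ∫ x, f x ^ 2 ∂μ := by
  have hfv := hf.comp_sub_right v
  have hsq := (memLp_two_iff_integrable_sq hf.1).1 hf
  have hsqv := (memLp_two_iff_integrable_sq hfv.1).1 hfv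
  have hdiff : Integrable (fun x => (f x - f (x - v)) ^ 2) μ :=
    (memLp_two_iff_integrable_sq (hf.sub hfv).1).1 (hf.sub hfv)
  have hpos : 0 < ∫ x, (f x - f (x - v)) ^ 2 ∂μ := by
    rw [integral_pos_iff_support_of_nonneg (fun x => sq_nonneg _) hdiff]
    have hsupp :
        Function.support (fun x => (f x - f (x - v)) ^ 2) = {x | f x ≠ f (x - v)} := by
      ext x; simp [sub_eq_zero]
    rw [hsupp, pos_iff_ne_zero]
    exact fun h => hne (ae_iff.2 h)
  have hsum : Integrable (fun x => f x ^ 2 + f (x - v) ^ 2) μ := hsq.add hsqv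
  have hexpand : ∫ x, (f x - f (x - v)) ^ 2 ∂μ
      = ∫ x, f x ^ 2 ∂μ + ∫ x, f (x - v) ^ 2 ∂μ - 2 * ∫ x, f x * f (x - v) ∂μ := by
    rw [← integral_add hsq hsqv, ← integral_const_mul,
      ← integral_sub hsum ((hf.integrable_mul_comp_sub v).const_mul 2)]
    congr 1 with x
    ring
  rw [hexpand, integral_sub_right_eq_self (fun x => f x ^ 2) v] at hpos
  linarith

end MeasureTheory

theorem not_ae_eq_comp_sub_of_norm_eq {E β : Type*} [NormedAddCommGroup E]
    [InnerProductSpace ℝ E] [FiniteDimensional ℝ E] [MeasurableSpace E] [BorelSpace E]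
    {μ : Measure E} [μ.IsAddHaarMeasure]
    {f : E → β} (hf : ∀ x y, f x = f y → ‖x‖ = ‖y‖) {v : E} (hv : v ≠ 0) :
    ¬ f =ᵐ[μ] fun x => f (x - v) := by
  intro h
  set S := AffineSubspace.perpBisector (0 : E) v
  have hS : ∀ᵐ x ∂μ, x ∈ S := h.mono fun x hx => by
    rw [AffineSubspace.mem_perpBisector_iff_dist_eq, dist_zero_right, dist_eq_norm]
    exact hf _ _ hx
  have hSnull : μ S = 0 :=
    Measure.addHaar_affineSubspace μ S (AffineSubspace.perpBisector_eq_top.not.2 hv.symm)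
  have : ∀ᵐ x ∂μ, False :=
    (hS.and (measure_eq_zero_iff_ae_notMem.1 hSnull)).mono fun x hx => hx.2 hx.1
  exact NeZero.ne μ (ae_eq_bot.1 (Filter.eventually_false_iff_eq_bot.1 this))

theorem memLp_two_one_add_norm_rpow_neg {E : Type*} [NormedAddCommGroup E] [NormedSpace ℝ E]
    [FiniteDimensional ℝ E] [MeasurableSpace E] [BorelSpace E]
    {μ : Measure E} [μ.IsAddHaarMeasure]
    {r : ℝ} (hr : (Module.finrank ℝ E : ℝ) < 2 * r) :
    MemLp (fun x : E => (1 + ‖x‖) ^ (-r)) 2 μ := by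
  refine (memLp_two_iff_integrable_sq (Measurable.aestronglyMeasurable (by fun_prop))).2 ?_
  refine (integrable_one_add_norm hr).congr (Filter.Eventually.of_forall fun x => ?_)
  dsimp only
  rw [← rpow_natCast, ← rpow_mul (by positivity)]
  push_cast
  ring_nf

theorem one_add_rpow_le_mul_add_rpow {ε α t : ℝ} (hε : 0 < ε) (hα : 1 ≤ α) (ht : 0 ≤ t) :
    (1 + t) ^ α ≤ 2 ^ (α - 1) * (1 + ε⁻¹) * (ε + t ^ α) := by
  have hconv : (1 + t) ^ α ≤ 2 ^ (α - 1) * (1 + t ^ α) := by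
    lift t to NNReal using ht
    have := NNReal.rpow_add_le_mul_rpow_add_rpow 1 t hα
    rw [NNReal.one_rpow] at this
    exact_mod_cast this
  have hsum : 1 + t ^ α ≤ (1 + ε⁻¹) * (ε + t ^ α) := by
    have : 0 ≤ ε⁻¹ * t ^ α := by positivity
    have : ε⁻¹ * ε = 1 := inv_mul_cancel₀ hε.ne'
    nlinarith
  calc (1 + t) ^ α ≤ 2 ^ (α - 1) * (1 + t ^ α) := hconv
    _ ≤ 2 ^ (α - 1) * ((1 + ε⁻¹) * (ε + t ^ α)) := by gcongr
    _ = _ := by ring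

theorem gE_le {ε α : ℝ} (hε : 0 < ε) (hα : 1 ≤ α) (x : EuclideanSpace ℝ (Fin 2)) :
    gE ε α x ≤ 2 ^ (α - 1) * (1 + ε⁻¹) * (1 + ‖x‖) ^ (-α) := by
  rw [gE, rpow_neg (by positivity), ← div_eq_mul_inv, div_le_div_iff₀ (by positivity)
    (by positivity), one_mul]
  exact one_add_rpow_le_mul_add_rpow hε hα (norm_nonneg x)

theorem memLp_two_gE {ε α : ℝ} (hε : 0 < ε) (hα : 1 < α) : MemLp (gE ε α) 2 volume := by
  have hmeas : Measurable (gE ε α) := by unfold gE; fun_prop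
  have hdom := (memLp_two_one_add_norm_rpow_neg (E := EuclideanSpace ℝ (Fin 2)) (μ := volume)
    (by norm_num; linarith)).const_mul (2 ^ (α - 1) * (1 + ε⁻¹))
  refine hdom.of_le hmeas.aestronglyMeasurable (Filter.Eventually.of_forall fun x => ?_)
  rw [norm_of_nonneg (by unfold gE; positivity), norm_of_nonneg (by positivity)]
  exact gE_le hε hα.le x

theorem norm_eq_of_gE_eq {ε α : ℝ} (hα : α ≠ 0) {x y : EuclideanSpace ℝ (Fin 2)}
    (h : gE ε α x = gE ε α y) : ‖x‖ = ‖y‖ := by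
  rw [gE, gE, one_div, one_div, inv_inj, add_right_inj] at h
  exact rpow_left_injOn hα (norm_nonneg x) (norm_nonneg y) h

theorem stmt10 (ε α : ℝ) (hε : 0 < ε) (hα : 2 < α)
    (v : EuclideanSpace ℝ (Fin 2)) (hv : v ≠ 0) :
    Integrable (fun x : EuclideanSpace ℝ (Fin 2) => gE ε α x * gE ε α (x - v)) volume ∧
    Integrable (fun x : EuclideanSpace ℝ (Fin 2) => (gE ε α x) ^ 2) volume ∧
    (∫ x : EuclideanSpace ℝ (Fin 2), gE ε α x * gE ε α (x - v))
      < ∫ x : EuclideanSpace ℝ (Fin 2), (gE ε α x) ^ 2 := by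
  have hL2 : MemLp (gE ε α) 2 volume := memLp_two_gE hε (by linarith)
  refine ⟨hL2.integrable_mul_comp_sub v, (memLp_two_iff_integrable_sq hL2.1).1 hL2,
    hL2.integral_mul_comp_sub_lt_integral_sq ?_⟩
  exact not_ae_eq_comp_sub_of_norm_eq (fun x y => norm_eq_of_gE_eq (by linarith)) hv
end
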